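/- Schur-complement positivity estimate: Let Q(ε) = [[I + M₁(ε), −M₂(ε)], [−M₂(ε)ᵀ, εI]] be symmetric with ‖M₁(ε)‖ ≤ c₁ε and ‖M₂(ε)‖ ≤ c₂ε for ε ∈ [0, ε₀]. Then there exist constants c, ε* > 0 such that the minimum eigenvalue satisfies λ_min(Q(ε)) ≥ cε for all ε ∈ (0, ε*). -/

import Mathlib

attribute [local instance] Matrix.linftyOpNormedAddCommGroup Matrix.linftyOpNormedSpace Matrix.linftyOpNormedRing Matrix.linftyOpNormedAlgebra

open Matrix

/-!
Write a vector as `(u, v)`. The quadratic form of `Q(ε) - (ε/2) I` is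
`(1 - ε/2)|u|² + uᵀM₁u - 2uᵀM₂v + (ε/2)|v|²`. Since `‖M₁‖, ‖M₂‖ = O(ε)`, AM-GM bounds
`|uᵀM₁u| ≤ O(ε)|u|²` and `|2uᵀM₂v| ≤ O(ε)|u|² + (ε/2)|v|²`; the `(ε/2)|v|²` term absorbs the
`v`-part of the cross term and, for small `ε`, the leading `|u|²` absorbs everything else.
The `ℓ^∞` operator norm enters only through `|uᵀAw|² ≤ card · ‖A‖² |u|² |w|²`.
-/

lemma fromBlocks_sub_smul_one {m k α : Type*} [Ring α] [DecidableEq m] [DecidableEq k]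
    (A : Matrix m m α) (B : Matrix m k α) (C : Matrix k m α) (D : Matrix k k α) (s : α) :
    fromBlocks A B C D - s • 1 = fromBlocks (A - s • 1) B C (D - s • 1) := by
  rw [← fromBlocks_one, fromBlocks_smul, sub_eq_add_neg, fromBlocks_neg, fromBlocks_add]
  simp [sub_eq_add_neg]

lemma abs_le_add_of_sq_le_four_mul {x a b : ℝ} (ha : 0 ≤ a) (hb : 0 ≤ b)
    (h : x ^ 2 ≤ 4 * a * b) : |x| ≤ a + b :=
  abs_le_of_sq_le_sq (by nlinarith [sq_nonneg (a - b)]) (add_nonneg ha hb)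

section

variable {m k : Type*} [Fintype m] [Fintype k]

lemma sq_norm_le_dotProduct_self (w : k → ℝ) : ‖w‖ ^ 2 ≤ w ⬝ᵥ w := by
  have hw : 0 ≤ w ⬝ᵥ w := Finset.sum_nonneg fun j _ => mul_self_nonneg (w j)
  have hcoord (j : k) : ‖w j‖ ≤ √(w ⬝ᵥ w) := Real.abs_le_sqrt <| by
    simpa only [sq, dotProduct] using
      Finset.single_le_sum (fun i _ => mul_self_nonneg (w i)) (Finset.mem_univ j)
  calc ‖w‖ ^ 2 ≤ √(w ⬝ᵥ w) ^ 2 :=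
        pow_le_pow_left₀ (norm_nonneg w) ((pi_norm_le_iff_of_nonneg (by positivity)).2 hcoord) 2
    _ = w ⬝ᵥ w := Real.sq_sqrt hw

lemma abs_dotProduct_le_sum_abs_mul_norm (u y : m → ℝ) :
    |u ⬝ᵥ y| ≤ (∑ i, |u i|) * ‖y‖ := by
  calc |u ⬝ᵥ y| ≤ ∑ i, |u i| * |y i| := by
        simpa only [dotProduct, abs_mul] using
          Finset.abs_sum_le_sum_abs (fun i => u i * y i) Finset.univ
    _ ≤ ∑ i, |u i| * ‖y‖ := by
        gcongr with i; exact norm_le_pi_norm y i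
    _ = (∑ i, |u i|) * ‖y‖ := (Finset.sum_mul _ _ _).symm

lemma sq_sum_abs_le_card_mul_dotProduct_self (u : m → ℝ) :
    (∑ i, |u i|) ^ 2 ≤ Fintype.card m * (u ⬝ᵥ u) := by
  simpa [dotProduct, sq_abs, sq] using
    sq_sum_le_card_mul_sum_sq (s := Finset.univ) (f := fun i => |u i|)

lemma sq_dotProduct_mulVec_le (A : Matrix m k ℝ) (u : m → ℝ) (w : k → ℝ) :
    (u ⬝ᵥ (A *ᵥ w)) ^ 2 ≤ Fintype.card m * ‖A‖ ^ 2 * ((u ⬝ᵥ u) * (w ⬝ᵥ w)) := by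
  have h := (abs_dotProduct_le_sum_abs_mul_norm u (A *ᵥ w)).trans
    (mul_le_mul_of_nonneg_left (linfty_opNorm_mulVec A w) (by positivity))
  calc (u ⬝ᵥ (A *ᵥ w)) ^ 2 ≤ ((∑ i, |u i|) * (‖A‖ * ‖w‖)) ^ 2 :=
        sq_le_sq' (by linarith [neg_abs_le (u ⬝ᵥ (A *ᵥ w))]) (le_of_abs_le h)
    _ = ‖A‖ ^ 2 * ((∑ i, |u i|) ^ 2 * ‖w‖ ^ 2) := by ring
    _ ≤ ‖A‖ ^ 2 * (Fintype.card m * (u ⬝ᵥ u) * (w ⬝ᵥ w)) := by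
        have hu := sq_sum_abs_le_card_mul_dotProduct_self u
        gcongr
        · exact (sq_nonneg _).trans hu
        · exact sq_norm_le_dotProduct_self w
    _ = _ := by ring

lemma posSemidef_fromBlocks_neg_of_two_mul_le {A : Matrix m m ℝ} {D : Matrix k k ℝ}
    (B : Matrix m k ℝ) (hA : A.IsSymm) (hD : D.IsSymm)
    (h : ∀ u v, 2 * (u ⬝ᵥ (B *ᵥ v)) ≤ u ⬝ᵥ (A *ᵥ u) + v ⬝ᵥ (D *ᵥ v)) :
    (fromBlocks A (-B) (-Bᵀ) D).PosSemidef := by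
  refine .of_dotProduct_mulVec_nonneg ?_ fun x => ?_
  · rw [isHermitian_iff_isSymm]
    exact hA.fromBlocks (by simp) hD
  · have hx : x = Sum.elim (x ∘ Sum.inl) (x ∘ Sum.inr) := (Sum.elim_comp_inl_inr x).symm
    have hBt : x ∘ Sum.inr ⬝ᵥ (Bᵀ *ᵥ (x ∘ Sum.inl)) = x ∘ Sum.inl ⬝ᵥ (B *ᵥ (x ∘ Sum.inr)) := by
      rw [mulVec_transpose, dotProduct_mulVec, dotProduct_comm]
    rw [star_trivial, hx, fromBlocks_mulVec, sumElim_dotProduct_sumElim]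
    simp only [Sum.elim_comp_inl, Sum.elim_comp_inr, neg_mulVec, dotProduct_add,
      dotProduct_neg, hBt]
    linarith [h (x ∘ Sum.inl) (x ∘ Sum.inr)]

lemma two_mul_dotProduct_mulVec_le_of_norm_le [DecidableEq m] [DecidableEq k]
    {A : Matrix m m ℝ} {B : Matrix m k ℝ} {c₁ c₂ ε : ℝ}
    (hε : 0 ≤ ε) (hA : ‖A‖ ≤ c₁ * ε) (hB : ‖B‖ ≤ c₂ * ε)
    (hsmall : ε * (1 + Fintype.card m * c₁ ^ 2 + 2 * Fintype.card m * c₂ ^ 2) ≤ 1)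
    (u : m → ℝ) (v : k → ℝ) :
    2 * (u ⬝ᵥ (B *ᵥ v)) ≤
      u ⬝ᵥ ((1 + A - (2⁻¹ * ε) • 1) *ᵥ u) + v ⬝ᵥ ((ε • 1 - (2⁻¹ * ε) • 1) *ᵥ v) := by
  simp only [sub_mulVec, add_mulVec, smul_mulVec, one_mulVec, dotProduct_sub, dotProduct_add,
    dotProduct_smul, smul_eq_mul]
  set N : ℝ := (Fintype.card m : ℝ)
  set a := u ⬝ᵥ u
  set b := v ⬝ᵥ v
  have ha : 0 ≤ a := Finset.sum_nonneg fun i _ => mul_self_nonneg (u i)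
  have hb : 0 ≤ b := Finset.sum_nonneg fun j _ => mul_self_nonneg (v j)
  have hA2 : ‖A‖ ^ 2 ≤ (c₁ * ε) ^ 2 := pow_le_pow_left₀ (norm_nonneg A) hA 2
  have hB2 : ‖B‖ ^ 2 ≤ (c₂ * ε) ^ 2 := pow_le_pow_left₀ (norm_nonneg B) hB 2
  have hAu : |u ⬝ᵥ (A *ᵥ u)| ≤ ε * a / 2 + N * c₁ ^ 2 * ε * a / 2 := by
    refine abs_le_add_of_sq_le_four_mul (by positivity) (by positivity) ?_
    calc (u ⬝ᵥ (A *ᵥ u)) ^ 2 ≤ N * ‖A‖ ^ 2 * (a * a) := sq_dotProduct_mulVec_le A u u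
      _ ≤ N * (c₁ * ε) ^ 2 * (a * a) := by gcongr
      _ = 4 * (ε * a / 2) * (N * c₁ ^ 2 * ε * a / 2) := by ring
  have hBuv : |2 * (u ⬝ᵥ (B *ᵥ v))| ≤ 2 * N * c₂ ^ 2 * ε * a + ε * b / 2 := by
    refine abs_le_add_of_sq_le_four_mul (by positivity) (by positivity) ?_
    calc (2 * (u ⬝ᵥ (B *ᵥ v))) ^ 2 = 4 * (u ⬝ᵥ (B *ᵥ v)) ^ 2 := by ring
      _ ≤ 4 * (N * ‖B‖ ^ 2 * (a * b)) := by gcongr; exact sq_dotProduct_mulVec_le B u v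
      _ ≤ 4 * (N * (c₂ * ε) ^ 2 * (a * b)) := by gcongr
      _ = 4 * (2 * N * c₂ ^ 2 * ε * a) * (ε * b / 2) := by ring
  have hsmall_a := mul_le_mul_of_nonneg_right hsmall ha
  have hNa : 0 ≤ ε * a * (N * c₁ ^ 2) := by positivity
  linarith [abs_le.1 hAu, abs_le.1 hBuv]

end

theorem schur_complement_estimate_general (n p : ℕ)
    (M₁ : ℝ → Matrix (Fin n) (Fin n) ℝ) (M₂ : ℝ → Matrix (Fin n) (Fin p) ℝ)
    (c₁ c₂ ε₀ : ℝ) (hε₀ : 0 < ε₀)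
    (hsym : ∀ ε ∈ Set.Icc (0:ℝ) ε₀, (M₁ ε).IsSymm)
    (hM₁ : ∀ ε ∈ Set.Icc (0:ℝ) ε₀, ‖M₁ ε‖ ≤ c₁ * ε)
    (hM₂ : ∀ ε ∈ Set.Icc (0:ℝ) ε₀, ‖M₂ ε‖ ≤ c₂ * ε) :
    ∃ c > (0:ℝ), ∃ εs > (0:ℝ), ∀ ε ∈ Set.Ioo (0:ℝ) εs,
      ((Matrix.fromBlocks (1 + M₁ ε) (-(M₂ ε)) (-(M₂ ε)ᵀ)
          (ε • (1 : Matrix (Fin p) (Fin p) ℝ))) -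
        (c * ε) • (1 : Matrix (Fin n ⊕ Fin p) (Fin n ⊕ Fin p) ℝ)).PosSemidef := by
  set K : ℝ := 1 + n * c₁ ^ 2 + 2 * n * c₂ ^ 2
  have hK : 0 < K := by positivity
  refine ⟨2⁻¹, by norm_num, min ε₀ K⁻¹, lt_min hε₀ (inv_pos.2 hK), fun ε ⟨hε, hεs⟩ => ?_⟩
  have hεε₀ : ε ∈ Set.Icc 0 ε₀ := ⟨hε.le, hεs.le.trans (min_le_left _ _)⟩
  have hsmall : ε * K ≤ 1 :=
    calc ε * K ≤ K⁻¹ * K := by gcongr; exact hεs.le.trans (min_le_right _ _)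
      _ = 1 := inv_mul_cancel₀ hK.ne'
  rw [fromBlocks_sub_smul_one]
  refine posSemidef_fromBlocks_neg_of_two_mul_le _ ?_ ?_ fun u v => ?_
  · exact (isSymm_one.add (hsym ε hεε₀)).sub (isSymm_one.smul _)
  · exact (isSymm_one.smul _).sub (isSymm_one.smul _)
  · exact two_mul_dotProduct_mulVec_le_of_norm_le hε.le (hM₁ ε hεε₀) (hM₂ ε hεε₀)
      (by rwa [Fintype.card_fin]) u v

/-- Schur-complement positivity estimate: let
`Q(ε) = [[I + M₁(ε), −M₂(ε)], [−M₂(ε)ᵀ, εI]]` be symmetric with `‖M₁(ε)‖ ≤ c₁ ε` and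
`‖M₂(ε)‖ ≤ c₂ ε` on `[0, ε₀]`. Then there are `c, ε* > 0` with `λ_min(Q(ε)) ≥ c ε`, i.e.
`Q(ε) − cε I ⪰ 0`, for all `ε ∈ (0, ε*)`. -/
theorem schur_complement_estimate (n p : ℕ)
    (M₁ : ℝ → Matrix (Fin n) (Fin n) ℝ) (M₂ : ℝ → Matrix (Fin n) (Fin p) ℝ)
    (c₁ c₂ ε₀ : ℝ) (hc₁ : 0 < c₁) (hc₂ : 0 < c₂) (hε₀ : 0 < ε₀)
    (hsym : ∀ ε ∈ Set.Icc (0:ℝ) ε₀, (M₁ ε).IsSymm)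
    (hM₁ : ∀ ε ∈ Set.Icc (0:ℝ) ε₀, ‖M₁ ε‖ ≤ c₁ * ε)
    (hM₂ : ∀ ε ∈ Set.Icc (0:ℝ) ε₀, ‖M₂ ε‖ ≤ c₂ * ε) :
    ∃ c > (0:ℝ), ∃ εs > (0:ℝ), ∀ ε ∈ Set.Ioo (0:ℝ) εs,
      ((Matrix.fromBlocks (1 + M₁ ε) (-(M₂ ε)) (-(M₂ ε)ᵀ)
          (ε • (1 : Matrix (Fin p) (Fin p) ℝ))) -
        (c * ε) • (1 : Matrix (Fin n ⊕ Fin p) (Fin n ⊕ Fin p) ℝ)).PosSemidef :=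
  schur_complement_estimate_general n p M₁ M₂ c₁ c₂ ε₀ hε₀ hsym hM₁ hM₂
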